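/- The presented group with generators x₁, x₂, x₃, x₄ and defining relations (x₃x₄)⁴ = (x₄x₃)⁴, x₂ = x₄x₃x₄x₃x₄⁻¹x₃⁻¹x₄⁻¹, x₁ = x₄x₃x₄x₃⁻¹x₄⁻¹, x₂ = x₃, x₁ = x₃⁻¹x₄x₃, and x₄x₃x₂x₁ = e is isomorphic to the presented group ⟨a₁, a₂ | (a₁a₂)² = e⟩. -/

import Mathlib

/-- Generators: `x₁, x₂, x₃, x₄` are `x 0, x 1, x 2, x 3`. -/
private def x : Fin 4 → FreeGroup (Fin 4) := FreeGroup.of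

/-- The relators of the presentation of `π₁` of the complement of the arrangement `ℬ₂`:
`(x₃x₄)⁴ = (x₄x₃)⁴`, `x₂ = x₄x₃x₄x₃x₄⁻¹x₃⁻¹x₄⁻¹`, `x₁ = x₄x₃x₄x₃⁻¹x₄⁻¹`, `x₂ = x₃`,
`x₁ = x₃⁻¹x₄x₃`, `x₄x₃x₂x₁ = e`. -/
def relsB2vk : Set (FreeGroup (Fin 4)) :=
  { (x 2 * x 3) ^ 4 * ((x 3 * x 2) ^ 4)⁻¹,
    x 1 * (x 3 * x 2 * x 3 * x 2 * (x 3)⁻¹ * (x 2)⁻¹ * (x 3)⁻¹)⁻¹,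
    x 0 * (x 3 * x 2 * x 3 * (x 2)⁻¹ * (x 3)⁻¹)⁻¹,
    x 1 * (x 2)⁻¹,
    x 0 * ((x 2)⁻¹ * x 3 * x 2)⁻¹,
    x 3 * x 2 * x 1 * x 0 }

/-- The target presentation `⟨a₁, a₂ | (a₁a₂)² = e⟩`. -/
def relA2 : Set (FreeGroup (Fin 2)) :=
  {(FreeGroup.of 0 * FreeGroup.of 1) ^ 2}

/-! Writing `a = x₄`, `b = x₃`, the relations `x₂ = x₃`, `x₁ = x₃⁻¹x₄x₃` eliminate `x₁, x₂`, and
then `x₄x₃x₂x₁ = e` becomes `(ab)² = e`. The three remaining relations are consequences of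
`(ab)² = e`: it gives `(ba)² = e`, so both sides of `(ba)⁴ = (ab)⁴` are trivial, and it says
`(ab)⁻¹ = ab`, which turns the other two into identities. Hence `a₁ ↦ x₄, a₂ ↦ x₃` and
`(x₁, x₂, x₃, x₄) ↦ (a₂⁻¹a₁a₂, a₂, a₂, a₁)` are mutually inverse. -/

theorem PresentedGroup.lift_of_eq_one_of_mem {α : Type*} {rels : Set (FreeGroup α)}
    {r : FreeGroup α} (hr : r ∈ rels) : FreeGroup.lift (PresentedGroup.of (rels := rels)) r = 1 := by
  have : FreeGroup.lift (PresentedGroup.of (rels := rels)) = PresentedGroup.mk rels :=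
    FreeGroup.ext_hom _ _ fun _ => FreeGroup.lift_apply_of
  rw [this]
  exact PresentedGroup.one_of_mem hr

section

variable {G : Type*} [Group G]

theorem mul_pow_eq_one_comm {a b : G} {n : ℕ} : (a * b) ^ n = 1 ↔ (b * a) ^ n = 1 := by
  rw [show b * a = a⁻¹ * (a * b) * a⁻¹⁻¹ by group, conj_pow, conj_eq_one_iff]

theorem lift_relA2_eq_one_iff (g : Fin 2 → G) :
    (∀ r ∈ relA2, FreeGroup.lift g r = 1) ↔ (g 0 * g 1) ^ 2 = 1 := by
  simp [relA2]

theorem lift_relsB2vk_eq_one_iff (g : Fin 4 → G) :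
    (∀ r ∈ relsB2vk, FreeGroup.lift g r = 1) ↔
      g 1 = g 2 ∧ g 0 = (g 2)⁻¹ * g 3 * g 2 ∧ (g 3 * g 2) ^ 2 = 1 := by
  simp only [relsB2vk, x, Set.mem_insert_iff, Set.mem_singleton_iff, forall_eq_or_imp,
    forall_eq, map_mul, map_inv, map_pow, FreeGroup.lift_apply_of, mul_inv_eq_one]
  constructor
  · rintro ⟨-, -, -, h1, h0, h⟩
    refine ⟨h1, h0, ?_⟩
    rw [sq, ← h, h1, h0]
    group
  · rintro ⟨h1, h0, h⟩
    rw [h1, h0]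
    set a := g 3
    set b := g 2
    have hsq : a * b * (a * b) = 1 := by rw [← sq, h]
    have hinv : (a * b)⁻¹ = a * b := inv_eq_of_mul_eq_one_right hsq
    refine ⟨?_, ?_, ?_, rfl, rfl, ?_⟩
    · rw [show 4 = 2 * 2 from rfl, pow_mul, pow_mul, h, mul_pow_eq_one_comm.1 h]
    · calc b = a⁻¹ * (a * b)⁻¹ := by rw [hinv]; group
        _ = a * b * (a * b) * a⁻¹ * (a * b)⁻¹ := by rw [hsq, one_mul]
        _ = a * b * a * b * a⁻¹ * b⁻¹ * a⁻¹ := by group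
    · calc b⁻¹ * a * b = b⁻¹ * (a * b)⁻¹ := by rw [hinv]; group
        _ = a * b * (a * b) * b⁻¹ * (a * b)⁻¹ := by rw [hsq, one_mul]
        _ = a * b * a * b⁻¹ * a⁻¹ := by group
    · rw [← hsq]
      group

end

theorem presentation_B2 :
    Nonempty (PresentedGroup relsB2vk ≃* PresentedGroup relA2) := by
  obtain ⟨h1, h0, h32⟩ := (lift_relsB2vk_eq_one_iff PresentedGroup.of).1
    fun _ => PresentedGroup.lift_of_eq_one_of_mem
  have hab := (lift_relA2_eq_one_iff PresentedGroup.of).1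
    fun _ => PresentedGroup.lift_of_eq_one_of_mem
  set a : PresentedGroup relA2 := .of 0
  set b : PresentedGroup relA2 := .of 1
  let φ := PresentedGroup.toGroup
    ((lift_relsB2vk_eq_one_iff ![b⁻¹ * a * b, b, b, a]).2 ⟨rfl, rfl, hab⟩)
  let ψ := PresentedGroup.toGroup
    ((lift_relA2_eq_one_iff ![(.of 3 : PresentedGroup relsB2vk), .of 2]).2 h32)
  refine ⟨φ.toMulEquiv ψ (PresentedGroup.ext fun i => ?_) (PresentedGroup.ext fun i => ?_)⟩
  · fin_cases i <;> simp [φ, ψ, a, b, PresentedGroup.toGroup.of, h1, h0]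
  · fin_cases i <;> simp [φ, ψ, a, b, PresentedGroup.toGroup.of]
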